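/- The multipliers of the Neville elimination of the Bessel coefficient matrix A are m_{ij} = (2i-2)(2i-3) / ((2i-j-1)(2i-j-2)) for 1 ≤ j < i ≤ n; i.e., p_{ij}/p_{i-1,j} equals this expression, where p_{ij} are the pivots. -/

import Mathlib

/-!
After `k` steps of Neville elimination, the entry in row `i` and column `j > k` is
`(2i-2)! (i-1-k)! (i+j-2-k)! / (2^(j-1) (i-j)! (j-1-k)! (2i-2-k)! (i-1)!)`.
This is proved by induction on `k`: for the closed form, the ratio of vertically adjacent
entries and the ratio of an entry before and after one more step are explicit rational
functions, so an elimination step reduces to an identity between rational functions.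
The multiplier is the quotient of two consecutive entries of column `j`.
-/

/-- Entries of the lower triangular Bessel coefficient matrix. -/
noncomputable def besselA (i j : ℕ) : ℝ :=
  if j ≤ i then ((i + j - 2).factorial : ℝ) / (2 ^ (j - 1) * (i - j).factorial * (j - 1).factorial)
  else 0

/-- `besselNE k i j` is the `(i,j)` entry of `A^{(k+1)}`, the matrix obtained after `k`
steps of Neville elimination of the Bessel coefficient matrix (no row exchanges needed). -/
noncomputable def besselNE : ℕ → ℕ → ℕ → ℝ
  | 0, i, j => besselA i j
  | k + 1, i, j =>
      if k + 1 ≤ j ∧ j < i then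
        besselNE k i j - besselNE k i (k + 1) / besselNE k (i - 1) (k + 1) * besselNE k (i - 1) j
      else besselNE k i j

open scoped Nat

/-- The entry `(k+1+b+c, k+1+b)` after `k` elimination steps, parametrized so that no
truncated subtraction occurs. -/
noncomputable def besselNEFormula (k b c : ℕ) : ℝ :=
  (2 * k + 2 * b + 2 * c)! * (b + c)! * (k + 2 * b + c)! /
    (2 ^ (k + b) * c ! * b ! * (k + 2 * b + 2 * c)! * (k + b + c)!)

namespace besselNEFormula

lemma pos (k b c : ℕ) : 0 < besselNEFormula k b c := by
  unfold besselNEFormula; positivity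

lemma succ_right (k b c : ℕ) :
    besselNEFormula k b (c + 1) =
      2 * (2 * k + 2 * b + 2 * c + 1) * (b + c + 1) * (k + 2 * b + c + 1) /
        ((c + 1) * (k + 2 * b + 2 * c + 1) * (k + 2 * b + 2 * c + 2)) * besselNEFormula k b c := by
  simp only [besselNEFormula, mul_add, mul_one, ← add_assoc, Nat.factorial_succ, Nat.cast_mul,
    Nat.cast_add, Nat.cast_one]
  field_simp
  ring

lemma succ_left (k b c : ℕ) :
    besselNEFormula (k + 1) b c =
      (b + 1) * (k + 2 * b + 2 * c + 2) / ((b + c + 1) * (k + 2 * b + c + 2)) *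
        besselNEFormula k (b + 1) c := by
  simp only [besselNEFormula, mul_add, mul_one, ← add_assoc, add_right_comm _ 1,
    Nat.factorial_succ, Nat.cast_mul, Nat.cast_add, Nat.cast_one, pow_succ]
  field_simp
  ring

lemma succ_left_zero (k b : ℕ) : besselNEFormula (k + 1) b 0 = besselNEFormula k (b + 1) 0 := by
  rw [succ_left]
  simp only [Nat.cast_zero, mul_zero, add_zero]
  rw [div_self (by positivity), one_mul]

lemma neville_step (k b c : ℕ) :
    besselNEFormula k (b + 1) (c + 1) -
        besselNEFormula k 0 (b + c + 2) / besselNEFormula k 0 (b + c + 1) *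
          besselNEFormula k (b + 1) c =
      besselNEFormula (k + 1) b (c + 1) := by
  rw [succ_left, succ_right k (b + 1) c, succ_right k 0 (b + c + 1),
    mul_div_cancel_right₀ _ (pos k 0 (b + c + 1)).ne']
  push_cast
  field_simp
  ring

end besselNEFormula

theorem besselNE_eq_formula (k b c : ℕ) :
    besselNE k (k + 1 + b + c) (k + 1 + b) = besselNEFormula k b c := by
  induction k generalizing b c with
  | zero =>
    rw [besselNE, besselA, if_pos (by omega), besselNEFormula,
      show 0 + 1 + b + c + (0 + 1 + b) - 2 = 2 * b + c by omega,
      show 0 + 1 + b + c - (0 + 1 + b) = c by omega, show 0 + 1 + b - 1 = b by omega]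
    simp only [mul_zero, zero_add]
    field_simp
  | succ k ih =>
    have ih' (b c i j : ℕ) (hi : i = k + 1 + b + c) (hj : j = k + 1 + b) :
        besselNE k i j = besselNEFormula k b c := hi ▸ hj ▸ ih b c
    rw [besselNE]
    rcases c with _ | c
    · rw [if_neg (by omega), ih' (b + 1) 0 _ _ (by omega) (by omega),
        besselNEFormula.succ_left_zero]
    · rw [if_pos (by omega), ih' (b + 1) (c + 1) _ _ (by omega) (by omega),
        ih' 0 (b + c + 2) _ _ (by omega) (by omega), ih' 0 (b + c + 1) _ _ (by omega) (by omega),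
        ih' (b + 1) c _ _ (by omega) (by omega), besselNEFormula.neville_step]

theorem bessel_NE_multipliers_general (i j : ℕ) (hj : 1 ≤ j) (hji : j < i) :
    besselNE (j - 1) i j / besselNE (j - 1) (i - 1) j
      = ((2 * i - 2 : ℕ) : ℝ) * ((2 * i - 3 : ℕ) : ℝ)
        / (((2 * i - j - 1 : ℕ) : ℝ) * ((2 * i - j - 2 : ℕ) : ℝ)) := by
  obtain ⟨k, rfl⟩ : ∃ k, j = k + 1 := ⟨j - 1, by omega⟩
  obtain ⟨m, rfl⟩ : ∃ m, i = k + 1 + (m + 1) := ⟨i - k - 2, by omega⟩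
  have column (m : ℕ) : besselNE k (k + 1 + m) (k + 1) = besselNEFormula k 0 m :=
    besselNE_eq_formula k 0 m
  rw [Nat.add_sub_cancel, show k + 1 + (m + 1) - 1 = k + 1 + m by omega, column, column,
    besselNEFormula.succ_right, mul_div_cancel_right₀ _ (besselNEFormula.pos k 0 m).ne',
    show 2 * (k + 1 + (m + 1)) - 2 = 2 * k + 2 * m + 2 by omega,
    show 2 * (k + 1 + (m + 1)) - 3 = 2 * k + 2 * m + 1 by omega,
    show 2 * (k + 1 + (m + 1)) - (k + 1) - 1 = k + 2 * m + 2 by omega,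
    show 2 * (k + 1 + (m + 1)) - (k + 1) - 2 = k + 2 * m + 1 by omega]
  push_cast
  field_simp
  ring

theorem bessel_NE_multipliers (n i j : ℕ) (hj : 1 ≤ j) (hji : j < i) (hin : i ≤ n) :
    besselNE (j - 1) i j / besselNE (j - 1) (i - 1) j
      = ((2 * i - 2 : ℕ) : ℝ) * ((2 * i - 3 : ℕ) : ℝ)
        / (((2 * i - j - 1 : ℕ) : ℝ) * ((2 * i - j - 2 : ℕ) : ℝ)) :=
  bessel_NE_multipliers_general i j hj hji
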